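/- Let (R,m) be an F-rational Noetherian local ring of characteristic p > 0 which is Cohen–Macaulay, and let q = (x₁,…,x_d) be an ideal generated by a full system of parameters. Then for every q' = p^e, the product q·q^[q'] is tightly closed, i.e., (q q^[q'])^* = q q^[q'] = q^* (q^[q'])^*. -/

import Mathlib

/-!
Definitions of characteristic-`p` notions (Frobenius powers, Frobenius/tight closure,
parameter ideals, F-rationality, F-injectivity, excellence, ...) used to state results
of "A characterization of F-rationality" (products of parameter ideals & tight closure).
-/

open IsLocalRing

universe u

section BasicDefs

variable (A : Type u) [CommRing A] (p : ℕ)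

/-- The Frobenius power `I^[q]` of an ideal: the ideal generated by `q`-th powers
of elements of `I`. -/
def fpow (I : Ideal A) (q : ℕ) : Ideal A :=
  Ideal.span ((fun x => x ^ q) '' (I : Set A))

/-- `A°`: the complement of the union of the minimal primes of `A`. -/
def rcirc : Set A := {c | ∀ P ∈ minimalPrimes A, c ∉ P}

/-- The Frobenius closure `I^F` of an ideal `I` in a ring of characteristic `p`:
elements `x` with `x^(p^e) ∈ I^[p^e]` for all `e ≫ 0`.  (In characteristic `p` the
defining set is already an ideal, so taking the span is harmless.) -/
def fcl (I : Ideal A) : Ideal A :=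
  Ideal.span {x | ∃ N, ∀ e ≥ N, x ^ p ^ e ∈ fpow A I (p ^ e)}

/-- The tight closure `I^*` of an ideal `I` in a ring of characteristic `p`:
elements `x` such that `c * x^(p^e) ∈ I^[p^e]` for some `c ∈ A°` and all `e ≫ 0`. -/
def tcl (I : Ideal A) : Ideal A :=
  Ideal.span {x | ∃ c ∈ rcirc A, ∃ N, ∀ e ≥ N, c * x ^ p ^ e ∈ fpow A I (p ^ e)}

/-- The integral closure of an ideal: elements `x` satisfying an equation
`x^n + a₁ x^(n-1) + ⋯ + a_n = 0` with `aᵢ ∈ Iⁱ`. -/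
def icl (I : Ideal A) : Set A :=
  {x | ∃ n : ℕ, 0 < n ∧ ∃ a : ℕ → A, (∀ i, 1 ≤ i → i ≤ n → a i ∈ I ^ i) ∧
    x ^ n + ∑ i ∈ Finset.Icc 1 n, a i * x ^ (n - i) = 0}

/-- A filter regular element: `(0 :_A x)` has finite length. -/
def IsFilterRegular (x : A) : Prop :=
  IsFiniteLength A ((⊥ : Submodule A A).colon (Ideal.span {x}))

/-- A filter regular sequence: each `x i` is filter regular modulo its predecessors. -/
def IsFilterRegularSeq {t : ℕ} (x : Fin t → A) : Prop :=
  ∀ i : Fin t,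
    IsFilterRegular (A ⧸ Ideal.span (x '' {j | j < i}))
      (Ideal.Quotient.mk (Ideal.span (x '' {j | j < i})) (x i))

/-- An equidimensional ring: `dim A/P = dim A` for every minimal prime `P`. -/
def IsEquidim : Prop :=
  ∀ P ∈ minimalPrimes A, ringKrullDim (A ⧸ P) = ringKrullDim A

/-- A test element: `c ∈ A°` with `c · I^* ⊆ I` for every ideal `I`. -/
def HasTestElement : Prop :=
  ∃ c ∈ rcirc A, ∀ I : Ideal A, ∀ x ∈ tcl A p I, c * x ∈ I

end BasicDefs

section LocalDefs

variable (A : Type u) [CommRing A] [IsLocalRing A] (p : ℕ)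

/-- A (possibly partial) system of parameters of a local ring. -/
def IsSOP {t : ℕ} (x : Fin t → A) : Prop :=
  (∀ i, x i ∈ maximalIdeal A) ∧
    ringKrullDim (A ⧸ Ideal.span (Set.range x)) + (t : WithBot ℕ∞) = ringKrullDim A

/-- A full system of parameters of a local ring. -/
def IsFullSOP {t : ℕ} (x : Fin t → A) : Prop :=
  IsSOP A x ∧ (t : WithBot (WithTop ℕ)) = ringKrullDim A

/-- A parameter ideal: an ideal generated by a (possibly partial) system of parameters. -/
def IsParamIdeal (q : Ideal A) : Prop :=
  ∃ (t : ℕ) (x : Fin t → A), IsSOP A x ∧ q = Ideal.span (Set.range x)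

/-- An ideal generated by a full system of parameters. -/
def IsFullParamIdeal (q : Ideal A) : Prop :=
  ∃ (t : ℕ) (x : Fin t → A), IsFullSOP A x ∧ q = Ideal.span (Set.range x)

/-- F-rationality: every parameter ideal is tightly closed. -/
def FRational : Prop :=
  ∀ q : Ideal A, IsParamIdeal A q → tcl A p q = q

/-- Weak F-regularity: every ideal is tightly closed. -/
def WeaklyFRegular : Prop := ∀ I : Ideal A, tcl A p I = I

/-- The parameter test ideal `τ_par(A) = ⋂_q (q : q^*)`. -/
noncomputable def paramTestIdeal : Ideal A :=
  ⨅ (q : Ideal A) (_ : IsParamIdeal A q), Submodule.colon q (tcl A p q)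

/-- F-rationality on the punctured spectrum. -/
def FRationalOnPunctured : Prop :=
  ∀ (P : Ideal A) [P.IsPrime], P ≠ maximalIdeal A →
    FRational (Localization.AtPrime P) p

/-- Cohen–Macaulay local ring: every full system of parameters is a regular sequence. -/
def IsCMLocal : Prop :=
  ∀ (t : ℕ) (x : Fin t → A), IsFullSOP A x →
    RingTheory.Sequence.IsRegular A (List.ofFn x)

/-- An `m`-primary ideal of a local ring. -/
def IsMPrimary (q : Ideal A) : Prop := q.radical = maximalIdeal A

end LocalDefs

section FInj

variable (A : Type u) [CommRing A] (p : ℕ) [ExpChar A p]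

/-- `A` viewed as a module over itself by restriction of scalars along the Frobenius. -/
def FrobTwist (_p : ℕ) : Type u := A

instance : AddCommGroup (FrobTwist A p) := inferInstanceAs (AddCommGroup A)

noncomputable instance : Module A (FrobTwist A p) := Module.compHom A (frobenius A p)

/-- The Frobenius `x ↦ x^p`, as an `A`-linear map `A → F_* A`. -/
noncomputable def frobHom : A →ₗ[A] FrobTwist A p where
  toFun x := x ^ p
  map_add' x y := add_pow_expChar x y p
  map_smul' r x := by
    show (r * x) ^ p = frobenius A p r * x ^ p
    rw [frobenius_def, mul_pow]

/-- F-injectivity: the map induced by the Frobenius on each local cohomology module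
`H^i_m(A)` is injective. -/
noncomputable def FInjective [IsLocalRing A] : Prop :=
  ∀ i : ℕ, Function.Injective
    ((localCohomology (maximalIdeal A) i).map
      (ModuleCat.ofHom (frobHom A p) :
        ModuleCat.of A A ⟶ ModuleCat.of A (FrobTwist A p)))

end FInj

section Excellence

variable (B : Type u) [CommRing B]

/-- A regular local ring: Noetherian, and the maximal ideal is generated by
`dim B` elements. -/
def IsRegularLocal [IsLocalRing B] : Prop :=
  IsNoetherianRing B ∧ ∃ (t : ℕ) (x : Fin t → B),
    maximalIdeal B = Ideal.span (Set.range x) ∧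
      (t : WithBot (WithTop ℕ)) = ringKrullDim B

/-- A regular ring: all localizations at primes are regular local rings. -/
def IsRegularRing' : Prop :=
  ∀ (P : Ideal B) [P.IsPrime], IsRegularLocal (Localization.AtPrime P)

/-- A saturated chain of primes. -/
def IsSaturatedChain {n : ℕ} (c : Fin (n + 1) → Ideal B) : Prop :=
  StrictMono c ∧ (∀ i, (c i).IsPrime) ∧
    ∀ i : Fin n, ¬∃ r : Ideal B, r.IsPrime ∧ c i.castSucc < r ∧ r < c i.succ

/-- A catenary ring: any two saturated chains of primes with the same endpoints
have the same length. -/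
def IsCatenary : Prop :=
  ∀ (P Q : Ideal B), P.IsPrime → Q.IsPrime → P ≤ Q →
    ∀ (n m : ℕ) (c : Fin (n + 1) → Ideal B) (d : Fin (m + 1) → Ideal B),
      IsSaturatedChain B c → IsSaturatedChain B d →
      c 0 = P → c (Fin.last n) = Q → d 0 = P → d (Fin.last m) = Q → n = m

/-- Universally catenary: every finitely generated `B`-algebra
(i.e. quotient of a polynomial ring over `B`) is catenary. -/
def IsUniversallyCatenary : Prop :=
  ∀ (n : ℕ) (I : Ideal (MvPolynomial (Fin n) B)),
    IsCatenary (MvPolynomial (Fin n) B ⧸ I)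

/-- J-2: the regular locus of every finitely generated `B`-algebra is open. -/
def IsJ2 : Prop :=
  ∀ (n : ℕ) (I : Ideal (MvPolynomial (Fin n) B)),
    IsOpen {P : PrimeSpectrum (MvPolynomial (Fin n) B ⧸ I) |
      IsRegularLocal (Localization.AtPrime P.asIdeal)}

/-- The G-ring (geometrically regular formal fibers) condition for a Noetherian local
ring, via the classical characterization: for every module-finite `B`-algebra `C`
which is a local domain, the generic formal fiber of `C` is regular. -/
def IsGLocal [IsLocalRing B] : Prop :=
  ∀ (C : Type u) [CommRing C] [Algebra B C] [IsLocalRing C] [IsDomain C],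
    Module.Finite B C →
      IsRegularRing' (Localization
        (Submonoid.map (algebraMap C (AdicCompletion (maximalIdeal C) C))
          (nonZeroDivisors C)))

/-- An excellent local ring: Noetherian, geometrically regular formal fibers (G-ring),
J-2, and universally catenary. -/
def IsExcellentLocal [IsLocalRing B] : Prop :=
  IsNoetherianRing B ∧ IsGLocal B ∧ IsJ2 B ∧ IsUniversallyCatenary B

/-- A Cohen–Macaulay ring: all localizations at primes are Cohen–Macaulay local rings. -/
def IsCMRing : Prop :=
  ∀ (P : Ideal B) [P.IsPrime], IsCMLocal (Localization.AtPrime P)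

/-- A homomorphic image of a (Noetherian) Cohen–Macaulay ring. -/
def IsHomImageOfCM : Prop :=
  ∃ (S : Type u) (_ : CommRing S) (f : S →+* B),
    Function.Surjective f ∧ IsNoetherianRing S ∧ IsCMRing S

/-- Locally equidimensional: all localizations at primes are equidimensional. -/
def IsLocallyEquidim : Prop :=
  ∀ (P : Ideal B) [P.IsPrime], IsEquidim (Localization.AtPrime P)

/-- Permutable parameters: for every permutation, the ideal generated by each initial
segment is proper and all of its minimal primes have height equal to the length of
the segment. -/
def ArePermutableParameters {t : ℕ} (x : Fin t → B) : Prop :=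
  ∀ (σ : Equiv.Perm (Fin t)) (i : ℕ), i ≤ t →
    Ideal.span ((fun j => x (σ j)) '' {j : Fin t | (j : ℕ) < i}) ≠ ⊤ ∧
    ∀ (P : Ideal B) [P.IsPrime],
      P ∈ (Ideal.span ((fun j => x (σ j)) '' {j : Fin t | (j : ℕ) < i})).minimalPrimes →
        ringKrullDim (Localization.AtPrime P) = (i : WithBot (WithTop ℕ))

/-- An ideal generated by monomials in the elements `x i`. -/
def GeneratedByMonomialsIn {t : ℕ} (x : Fin t → B) (J : Ideal B) : Prop :=
  ∃ s : Finset (Fin t → ℕ),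
    J = Ideal.span ((fun a : Fin t → ℕ => ∏ i, x i ^ a i) '' (s : Set (Fin t → ℕ)))

end Excellence

section Monomial

variable (p t : ℕ)

/-- An irreducible monomial ideal: generated by pure powers of a subset of the
variables. -/
def IsPurePowerIdeal (I : Ideal (MvPolynomial (Fin t) (ZMod p))) : Prop :=
  ∃ (S : Finset (Fin t)) (a : Fin t → ℕ), (∀ i ∈ S, 1 ≤ a i) ∧
    I = Ideal.span ((fun i => MvPolynomial.X i ^ a i) '' (S : Set (Fin t)))

/-- A monomial ideal of the polynomial ring. -/
def IsMonomialIdeal (I : Ideal (MvPolynomial (Fin t) (ZMod p))) : Prop :=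
  ∃ s : Set (Fin t → ℕ),
    I = Ideal.span ((fun a : Fin t → ℕ => ∏ i, MvPolynomial.X i ^ a i) '' s)

end Monomial

/-!
An element `z` of `(q q^[Q])^*` lies in `(q^[Q])^* = q^[Q]`, so `z = ∑ aᵢ xᵢ^Q`. For a test
multiplier `c` and `P = p^E`, Frobenius gives `c z^P = ∑ c aᵢ^P xᵢ^(QP) ∈ q^[P] · (x^(QP))`.
Since the `xᵢ^(QP)` form a regular sequence in every order and `(x^(QP)) ⊆ q^[P]`, comparing
coefficients gives `c aⱼ^P ∈ q^[P]`. Hence `aⱼ ∈ q^* = q`, and `z ∈ q q^[Q]`.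
-/

open scoped Pointwise

section Frobenius

variable {R : Type u} [CommRing R]

lemma one_mem_rcirc : (1 : R) ∈ rcirc R := fun P hP h1 =>
  hP.1.1.ne_top ((Ideal.eq_top_iff_one P).mpr h1)

lemma pow_mem_fpow {I : Ideal R} {x : R} (hx : x ∈ I) (n : ℕ) : x ^ n ∈ fpow R I n :=
  Ideal.subset_span ⟨x, hx, rfl⟩

lemma fpow_mono {I J : Ideal R} (h : I ≤ J) (n : ℕ) : fpow R I n ≤ fpow R J n :=
  Ideal.span_mono (Set.image_mono h)

lemma mem_tcl_of_forall_ge (p : ℕ) {I : Ideal R} {z c : R} (hc : c ∈ rcirc R) {N : ℕ}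
    (h : ∀ e ≥ N, c * z ^ p ^ e ∈ fpow R I (p ^ e)) : z ∈ tcl R p I :=
  Ideal.subset_span ⟨c, hc, N, h⟩

lemma le_tcl (p : ℕ) (I : Ideal R) : I ≤ tcl R p I := fun z hz =>
  mem_tcl_of_forall_ge p one_mem_rcirc (N := 0) fun e _ => by
    rw [one_mul]; exact pow_mem_fpow hz _

lemma tcl_mono (p : ℕ) {I J : Ideal R} (h : I ≤ J) : tcl R p I ≤ tcl R p J :=
  Ideal.span_mono fun _ ⟨c, hc, N, hN⟩ => ⟨c, hc, N, fun e he => fpow_mono h _ (hN e he)⟩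

variable (p : ℕ) [Fact p.Prime] [CharP R p]

lemma fpow_span (S : Set R) (n : ℕ) :
    fpow R (Ideal.span S) (p ^ n) = Ideal.span ((· ^ p ^ n) '' S) := by
  refine le_antisymm (Ideal.span_le.mpr ?_) (Ideal.span_le.mpr ?_)
  · rintro _ ⟨y, hy, rfl⟩
    change y ^ p ^ n ∈ Ideal.span _
    induction hy using Submodule.span_induction with
    | mem x hx => exact Ideal.subset_span ⟨x, hx, rfl⟩
    | zero => rw [zero_pow (expChar_pow_pos R p n).ne']; exact zero_mem _
    | add x y _ _ hx hy => rw [add_pow_char_pow]; exact add_mem hx hy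
    | smul a x _ hx => rw [smul_eq_mul, mul_pow]; exact Ideal.mul_mem_left _ _ hx
  · rintro _ ⟨y, hy, rfl⟩
    exact pow_mem_fpow (Ideal.subset_span hy) _

lemma fpow_span_range {ι : Type*} (x : ι → R) (n : ℕ) :
    fpow R (Ideal.span (Set.range x)) (p ^ n) = Ideal.span (Set.range fun i => x i ^ p ^ n) := by
  rw [fpow_span, ← Set.range_comp]
  rfl

lemma fpow_mul (I J : Ideal R) (n : ℕ) :
    fpow R (I * J) (p ^ n) = fpow R I (p ^ n) * fpow R J (p ^ n) := by
  have h := fpow_span p ((I : Set R) * (J : Set R)) n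
  rw [← Ideal.span_mul_span', Ideal.span_eq, Ideal.span_eq] at h
  rw [h, show (· ^ p ^ n) = ⇑(powMonoidHom (p ^ n) : R →* R) from rfl, Set.image_mul,
    ← Ideal.span_mul_span']
  rfl

end Frobenius

lemma ringKrullDim_quotient_eq_of_radical_eq {R : Type u} [CommRing R] {I J : Ideal R}
    (h : I.radical = J.radical) : ringKrullDim (R ⧸ I) = ringKrullDim (R ⧸ J) := by
  rw [ringKrullDim_quotient, ringKrullDim_quotient, ← PrimeSpectrum.zeroLocus_radical, h,
    PrimeSpectrum.zeroLocus_radical]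

section Parameters

variable {R : Type u} [CommRing R] [IsLocalRing R] {t : ℕ}

lemma IsFullSOP.of_radical_eq {x y : Fin t → R} (hx : IsFullSOP R x)
    (hy : ∀ i, y i ∈ maximalIdeal R)
    (h : (Ideal.span (Set.range y)).radical = (Ideal.span (Set.range x)).radical) :
    IsFullSOP R y :=
  ⟨⟨hy, ringKrullDim_quotient_eq_of_radical_eq h ▸ hx.1.2⟩, hx.2⟩

lemma IsFullSOP.pow {x : Fin t → R} (hx : IsFullSOP R x) {M : ℕ} (hM : 0 < M) :
    IsFullSOP R (fun i => x i ^ M) := by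
  refine hx.of_radical_eq (fun i => Ideal.pow_mem_of_mem _ (hx.1.1 i) _ hM)
    (le_antisymm (Ideal.radical_mono ?_) (Ideal.radical_le_radical_iff.mpr ?_))
  · rw [Ideal.span_le]
    rintro _ ⟨i, rfl⟩
    exact Ideal.pow_mem_of_mem _ (Ideal.subset_span (Set.mem_range_self i)) _ hM
  · rw [Ideal.span_le]
    rintro _ ⟨i, rfl⟩
    exact Ideal.mem_radical_of_pow_mem
      (Ideal.le_radical (Ideal.subset_span (Set.mem_range_self i)))

lemma IsCMLocal.mem_of_mul_mem_span_compl (hCM : IsCMLocal R) {x : Fin t → R}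
    (hx : IsFullSOP R x) (j : Fin t) {v : R} (hv : v * x j ∈ Ideal.span (x '' {j}ᶜ)) :
    v ∈ Ideal.span (x '' {j}ᶜ) := by
  obtain ⟨n, rfl⟩ : ∃ n, t = n + 1 := ⟨t - 1, by have := j.pos; omega⟩
  have hrest : x '' {j}ᶜ = Set.range (x ∘ j.succAbove) := by
    rw [Set.range_comp, Fin.range_succAbove]
  -- moving `x j` to the end gives again a full system of parameters, hence a regular sequence
  have hy : IsFullSOP R (Fin.snoc (x ∘ j.succAbove) (x j) : Fin (n + 1) → R) := by
    refine hx.of_radical_eq (fun i => ?_) ?_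
    · refine Fin.lastCases ?_ (fun i => ?_) i <;> simp [hx.1.1]
    · rw [Fin.range_snoc, ← hrest, Set.insert_image_compl_eq_range]
  have hreg := (hCM _ _ hy).toIsWeaklyRegular
  rw [List.ofFn_succ', List.concat_eq_append, RingTheory.Sequence.isWeaklyRegular_append_iff,
    RingTheory.Sequence.isWeaklyRegular_singleton_iff] at hreg
  have hideal : (Ideal.ofList (List.ofFn fun i : Fin n =>
      (Fin.snoc (x ∘ j.succAbove) (x j) : Fin (n + 1) → R) i.castSucc) • ⊤ : Submodule R R)
      = Ideal.span (x '' {j}ᶜ) := by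
    simp only [Fin.snoc_castSucc, Function.comp_apply, smul_eq_mul, Ideal.mul_top, hrest]
    exact congrArg Ideal.span (Set.ext fun r => List.mem_ofFn' _ r)
  rw [← hideal] at hv ⊢
  rw [mul_comm] at hv
  exact mem_of_isSMulRegular_quotient_of_smul_mem (by simpa using hreg.2) hv

lemma IsCMLocal.coeff_mem_of_sum_mem_mul_span (hCM : IsCMLocal R) {y : Fin t → R}
    (hy : IsFullSOP R y) {F : Ideal R} (hyF : Ideal.span (Set.range y) ≤ F) {b : Fin t → R}
    (hb : ∑ i, b i * y i ∈ F * Ideal.span (Set.range y)) (j : Fin t) : b j ∈ F := by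
  set J := Ideal.span (y '' {j}ᶜ)
  have hb' : b j * y j ∈ J ⊔ F * Ideal.span {y j} := by
    have hrest : ∑ i ∈ {j}ᶜ, b i * y i ∈ J := Ideal.sum_mem _ fun i hi =>
      Ideal.mul_mem_left _ _ (Ideal.subset_span ⟨i, by simpa using hi, rfl⟩)
    have hmul : F * Ideal.span (Set.range y) ≤ J ⊔ F * Ideal.span {y j} := by
      rw [← Set.insert_image_compl_eq_range, Set.insert_eq, Ideal.span_union, Ideal.mul_sup]
      exact sup_le le_sup_right (Ideal.mul_le_right.trans le_sup_left)
    have := sub_mem (hmul hb) (Submodule.mem_sup_left hrest)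
    rwa [Fintype.sum_eq_add_sum_compl j, add_sub_cancel_right] at this
  obtain ⟨w, hw, _, hv, hsum⟩ := Submodule.mem_sup.mp hb'
  obtain ⟨u, hu, rfl⟩ := Ideal.mem_mul_span_singleton.mp hv
  have hcolon : (b j - u) * y j ∈ J := by rwa [sub_mul, ← hsum, add_sub_cancel_right]
  have hJF : J ≤ F := (Ideal.span_mono (Set.image_subset_range _ _)).trans hyF
  simpa using add_mem (hJF (hCM.mem_of_mul_mem_span_compl hy j hcolon)) hu

lemma IsCMLocal.coeff_mem_tcl (p : ℕ) [Fact p.Prime] [CharP R p] (hCM : IsCMLocal R)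
    {x : Fin t → R} (hx : IsFullSOP R x) {a : Fin t → R} {c : R} (hc : c ∈ rcirc R) {N e : ℕ}
    (h : ∀ E ≥ N, c * (∑ i, a i * x i ^ p ^ e) ^ p ^ E ∈
      fpow R (Ideal.span (Set.range x) * fpow R (Ideal.span (Set.range x)) (p ^ e)) (p ^ E))
    (j : Fin t) : a j ∈ tcl R p (Ideal.span (Set.range x)) := by
  have hp : 0 < p := (Fact.out : p.Prime).pos
  refine mem_tcl_of_forall_ge p hc (N := N) fun E hE => ?_
  rw [fpow_span_range]
  refine hCM.coeff_mem_of_sum_mem_mul_span (hx.pow (M := p ^ e * p ^ E) (by positivity))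
    ?_ (b := fun i => c * a i ^ p ^ E) ?_ j
  · rw [Ideal.span_le]
    rintro _ ⟨i, rfl⟩
    change x i ^ (p ^ e * p ^ E) ∈ _
    rw [mul_comm, pow_mul]
    exact Ideal.pow_mem_of_mem _ (Ideal.subset_span (Set.mem_range_self i)) _ (by positivity)
  · have hE := h E hE
    rw [fpow_mul, fpow_span_range, fpow_span_range, fpow_span_range] at hE
    simp_rw [← pow_mul] at hE
    convert hE using 1
    rw [sum_pow_char_pow, Finset.mul_sum]
    simp_rw [mul_pow, ← pow_mul, mul_assoc]

end Parameters

theorem statement_4_general (R : Type u) [CommRing R] [IsLocalRing R]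
    (p : ℕ) [Fact p.Prime] [CharP R p]
    (hFR : FRational R p) (hCM : IsCMLocal R)
    (q : Ideal R) (hq : IsFullParamIdeal R q) (e : ℕ) :
    tcl R p (q * fpow R q (p ^ e)) = q * fpow R q (p ^ e) ∧
    q * fpow R q (p ^ e) = tcl R p q * tcl R p (fpow R q (p ^ e)) := by
  obtain ⟨t, x, hx, rfl⟩ := hq
  have htcl_q : tcl R p (Ideal.span (Set.range x)) = Ideal.span (Set.range x) :=
    hFR _ ⟨t, x, hx.1, rfl⟩
  have htcl_fpow : tcl R p (fpow R (Ideal.span (Set.range x)) (p ^ e)) =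
      fpow R (Ideal.span (Set.range x)) (p ^ e) := by
    rw [fpow_span_range]
    exact hFR _ ⟨t, _, (hx.pow (pow_pos (Fact.out : p.Prime).pos e)).1, rfl⟩
  refine ⟨le_antisymm (Ideal.span_le.mpr ?_) (le_tcl p _), by rw [htcl_q, htcl_fpow]⟩
  rintro z ⟨c, hc, N, hN⟩
  have hz : z ∈ fpow R (Ideal.span (Set.range x)) (p ^ e) :=
    htcl_fpow ▸ tcl_mono p Ideal.mul_le_right (Ideal.subset_span ⟨c, hc, N, hN⟩)
  rw [fpow_span_range, Submodule.mem_span_range_iff_exists_fun] at hz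
  obtain ⟨a, rfl⟩ := hz
  simp only [smul_eq_mul] at hN ⊢
  have ha : ∀ j, a j ∈ Ideal.span (Set.range x) := fun j =>
    htcl_q ▸ hCM.coeff_mem_tcl p hx hc hN j
  exact Ideal.sum_mem _ fun i _ =>
    Ideal.mul_mem_mul (ha i) (pow_mem_fpow (Ideal.subset_span (Set.mem_range_self i)) _)

/-- In an F-rational Cohen–Macaulay Noetherian local ring, for `q`
generated by a full system of parameters and any `q' = p^e`, the product `q·q^[q']`
is tightly closed, and equals `q^* (q^[q'])^*`. -/
theorem statement_4 (R : Type u) [CommRing R] [IsLocalRing R] [IsNoetherianRing R]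
    (p : ℕ) [Fact p.Prime] [CharP R p]
    (hFR : FRational R p) (hCM : IsCMLocal R)
    (q : Ideal R) (hq : IsFullParamIdeal R q) (e : ℕ) :
    tcl R p (q * fpow R q (p ^ e)) = q * fpow R q (p ^ e) ∧
    q * fpow R q (p ^ e) = tcl R p q * tcl R p (fpow R q (p ^ e)) :=
  statement_4_general R p hFR hCM q hq e
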